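/- Kernel identity for the full construction in dimension d = 3: suppose P_{w₀} f₀ ≡ 0 on TS¹. Define f(x₁,x₂,x₃) = ψ(x₃) f₀(x₁,x₂) and for θ ∈ S² \ {±e₃}, W(x,θ) = w₀(x₁,x₂, α(θ)) with α(θ) = [−e₃,θ]/‖[−e₃,θ]‖ (which lies in the x₁x₂-plane). Then R_W f(s,θ) = 0 for all s ∈ ℝ and θ ∈ S² \ {±e₃}, and also for θ = ±e₃ when W(x,±e₃) := w₀(x₁,x₂,e₁). -/

import Mathlib

open scoped InnerProductSpace
open MeasureTheory

/-- The cross product in `ℝ³` (on `EuclideanSpace ℝ (Fin 3)`). -/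
def cross3 (u v : EuclideanSpace ℝ (Fin 3)) : EuclideanSpace ℝ (Fin 3) :=
  WithLp.toLp 2 (fun i : Fin 3 => if i = 0 then u 1 * v 2 - u 2 * v 1
           else if i = 1 then u 2 * v 0 - u 0 * v 2
           else u 0 * v 1 - u 1 * v 0)

/-- The first two coordinates `(x₁,x₂)` of `x ∈ ℝ³`. -/
def proj12 (x : EuclideanSpace ℝ (Fin 3)) : EuclideanSpace ℝ (Fin 2) :=
  WithLp.toLp 2 (fun i : Fin 2 => x ⟨i.1, by omega⟩)

lemma line_zero
    (w₀ : EuclideanSpace ℝ (Fin 2) → EuclideanSpace ℝ (Fin 2) → ℝ)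
    (f₀ : EuclideanSpace ℝ (Fin 2) → ℝ)
    (hker : ∀ (y β : EuclideanSpace ℝ (Fin 2)), ‖β‖ = 1 → ⟪y, β⟫_ℝ = 0 →
      ∫ t : ℝ, w₀ (y + t • β) β * f₀ (y + t • β) = 0)
    (p β : EuclideanSpace ℝ (Fin 2)) (hβ : ‖β‖ = 1) :
    ∫ t : ℝ, w₀ (p + t • β) β * f₀ (p + t • β) = 0 := by
  set c : ℝ := ⟪p, β⟫_ℝ with hc
  set y : EuclideanSpace ℝ (Fin 2) := p - c • β with hy
  have hyβ : ⟪y, β⟫_ℝ = 0 := by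
    rw [hy, inner_sub_left, real_inner_smul_left, real_inner_self_eq_norm_sq, hβ]
    ring
  have key := hker y β hβ hyβ
  have harg : ∀ t : ℝ, y + (t + c) • β = p + t • β := by
    intro t; rw [hy]; module
  have hshift := integral_add_right_eq_self (μ := volume)
    (fun t : ℝ => w₀ (y + t • β) β * f₀ (y + t • β)) c
  calc ∫ t : ℝ, w₀ (p + t • β) β * f₀ (p + t • β)
      = ∫ t : ℝ, w₀ (y + (t + c) • β) β * f₀ (y + (t + c) • β) := by
        simp_rw [harg]
    _ = 0 := by rw [hshift]; exact key

lemma core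
    (w₀ : EuclideanSpace ℝ (Fin 2) → EuclideanSpace ℝ (Fin 2) → ℝ)
    (f₀ : EuclideanSpace ℝ (Fin 2) → ℝ)
    (hker : ∀ (y β : EuclideanSpace ℝ (Fin 2)), ‖β‖ = 1 → ⟪y, β⟫_ℝ = 0 →
      ∫ t : ℝ, w₀ (y + t • β) β * f₀ (y + t • β) = 0)
    (ψ : ℝ → ℝ)
    (f : EuclideanSpace ℝ (Fin 3) → ℝ)
    (hf : ∀ x, f x = ψ (x 2) * f₀ (proj12 x))
    (W : EuclideanSpace ℝ (Fin 3) → EuclideanSpace ℝ (Fin 3) → ℝ)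
    (θ : EuclideanSpace ℝ (Fin 3)) (hθ : ‖θ‖ = 1) (s : ℝ)
    (β : EuclideanSpace ℝ (Fin 2)) (hβ : ‖β‖ = 1)
    (u v : EuclideanSpace ℝ (Fin 3))
    (humem : u ∈ (Submodule.span ℝ {θ})ᗮ) (hvmem : v ∈ (Submodule.span ℝ {θ})ᗮ)
    (hun : ‖u‖ = 1) (hvn : ‖v‖ = 1) (huv : ⟪v, u⟫_ℝ = 0)
    (hu2 : u 2 = 0) (hup : proj12 u = β)
    (hWθ : ∀ x, W x θ = w₀ (proj12 x) β) :
    ∫ y : ((Submodule.span ℝ {θ})ᗮ : Submodule ℝ (EuclideanSpace ℝ (Fin 3))),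
        W (s • θ + (y : EuclideanSpace ℝ (Fin 3))) θ *
          f (s • θ + (y : EuclideanSpace ℝ (Fin 3))) = 0 := by
  have hθ0 : θ ≠ 0 := by
    intro h; rw [h, norm_zero] at hθ; norm_num at hθ
  set S : Submodule ℝ (EuclideanSpace ℝ (Fin 3)) := (Submodule.span ℝ {θ})ᗮ with hS
  have hrank : Module.finrank ℝ S = 2 := by
    have h1 : Module.finrank ℝ (Submodule.span ℝ {θ}) = 1 := finrank_span_singleton hθ0
    have h3 : Module.finrank ℝ (EuclideanSpace ℝ (Fin 3)) = 3 := finrank_euclideanSpace_fin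
    exact Submodule.finrank_add_finrank_orthogonal' (by rw [h1, h3])
  -- the orthonormal family
  set g : Fin 2 → S := ![⟨v, hvmem⟩, ⟨u, humem⟩] with hg
  have hvv : ⟪v, v⟫_ℝ = 1 := by
    rw [real_inner_self_eq_norm_sq, hvn]; norm_num
  have huu : ⟪u, u⟫_ℝ = 1 := by
    rw [real_inner_self_eq_norm_sq, hun]; norm_num
  have huv' : ⟪u, v⟫_ℝ = 0 := by rw [real_inner_comm]; exact huv
  have horth : Orthonormal ℝ g := by
    rw [orthonormal_iff_ite]
    intro i j
    fin_cases i <;> fin_cases j <;>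
      simp only [hg, Matrix.cons_val_zero, Matrix.cons_val_one, Matrix.head_cons,
        Submodule.coe_inner, Fin.isValue] <;>
      norm_num [hvv, huu, huv, huv', hun, hvn]
  have hcard : Fintype.card (Fin 2) = Module.finrank ℝ S := by simp [hrank]
  set b : Module.Basis (Fin 2) ℝ S := basisOfOrthonormalOfCardEqFinrank horth hcard with hb
  have hbg : ⇑b = g := coe_basisOfOrthonormalOfCardEqFinrank horth hcard
  set ob : OrthonormalBasis (Fin 2) ℝ S := b.toOrthonormalBasis (by rwa [hbg]) with hob
  have hobg : ⇑ob = g := by rw [hob, Module.Basis.coe_toOrthonormalBasis, hbg]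
  set F : S → ℝ := fun y =>
    W (s • θ + (y : EuclideanSpace ℝ (Fin 3))) θ *
      f (s • θ + (y : EuclideanSpace ℝ (Fin 3))) with hF
  have e1 := (ob.measurePreserving_repr_symm).integral_comp
    (ob.repr.symm.toHomeomorph.measurableEmbedding) F
  have e2 := ((EuclideanSpace.volume_preserving_symm_measurableEquiv_toLp (Fin 2)).symm).integral_comp
    ((MeasurableEquiv.toLp 2 (Fin 2 → ℝ)).measurableEmbedding)
    (fun w => F (ob.repr.symm w))
  have e3 := ((volume_preserving_piFinTwo (fun _ : Fin 2 => ℝ)).symm).integral_comp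
    ((MeasurableEquiv.piFinTwo (fun _ : Fin 2 => ℝ)).symm.measurableEmbedding)
    (fun p => F (ob.repr.symm ((MeasurableEquiv.toLp 2 (Fin 2 → ℝ)) p)))
  -- the point in the plane corresponding to z : ℝ × ℝ
  have hpt : ∀ z : ℝ × ℝ,
      ((ob.repr.symm ((MeasurableEquiv.toLp 2 (Fin 2 → ℝ))
          ((MeasurableEquiv.piFinTwo (fun _ : Fin 2 => ℝ)).symm z)) : S) :
        EuclideanSpace ℝ (Fin 3)) = z.1 • v + z.2 • u := by
    intro z
    set w : EuclideanSpace ℝ (Fin 2) :=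
      (MeasurableEquiv.toLp 2 (Fin 2 → ℝ))
        ((MeasurableEquiv.piFinTwo (fun _ : Fin 2 => ℝ)).symm z) with hw
    have hw0 : w 0 = z.1 := rfl
    have hw1 : w 1 = z.2 := rfl
    rw [← OrthonormalBasis.sum_repr_symm]
    rw [Fin.sum_univ_two, hobg]
    simp [hg, hw0, hw1]
  set G : ℝ × ℝ → ℝ := fun z =>
    ψ ((s • θ + z.1 • v) 2) *
      (w₀ (proj12 (s • θ + z.1 • v) + z.2 • β) β *
        f₀ (proj12 (s • θ + z.1 • v) + z.2 • β)) with hG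
  have hGz : ∀ z : ℝ × ℝ,
      F (ob.repr.symm ((MeasurableEquiv.toLp 2 (Fin 2 → ℝ))
        ((MeasurableEquiv.piFinTwo (fun _ : Fin 2 => ℝ)).symm z))) = G z := by
    intro z
    rw [hF]
    simp only []
    rw [hpt z, hWθ, hf]
    have hproj : proj12 (s • θ + (z.1 • v + z.2 • u)) =
        proj12 (s • θ + z.1 • v) + z.2 • β := by
      rw [← hup]
      ext i
      simp [proj12, PiLp.add_apply, PiLp.smul_apply]
      ring
    have hcoord : (s • θ + (z.1 • v + z.2 • u)) 2 = (s • θ + z.1 • v) 2 := by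
      simp [PiLp.add_apply, PiLp.smul_apply, hu2]
    rw [show s • θ + (z.1 • v + z.2 • u) = s • θ + (z.1 • v + z.2 • u) from rfl]
    rw [hproj, hcoord, hG]
    ring
  have chain : (∫ y : S, F y) = ∫ z : ℝ × ℝ, G z := by
    rw [← e1, ← e2, MeasurableEquiv.symm_symm, ← e3]
    exact integral_congr_ae (Filter.Eventually.of_forall (fun z => hGz z))
  rw [chain]
  by_cases hInt : Integrable G (volume : Measure (ℝ × ℝ))
  · rw [show (volume : Measure (ℝ × ℝ)) = (volume : Measure ℝ).prod volume from rfl] at hInt ⊢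
    rw [integral_prod G hInt]
    have hinner : ∀ x : ℝ, (∫ y : ℝ, G (x, y)) = 0 := by
      intro x
      have : (∫ y : ℝ, G (x, y)) =
          ψ ((s • θ + x • v) 2) * ∫ y : ℝ,
            w₀ (proj12 (s • θ + x • v) + y • β) β *
              f₀ (proj12 (s • θ + x • v) + y • β) := by
        rw [← integral_const_mul]
      rw [this, line_zero w₀ f₀ hker _ β hβ, mul_zero]
    simp [hinner]
  · exact integral_undef hInt

/-- kernel identity for the full construction in `d = 3`: suppose
`P_{w₀} f₀ ≡ 0` on `TS¹`. Define `f(x) = ψ(x₃) f₀(x₁,x₂)` and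
`W(x,θ) = w₀((x₁,x₂), proj₁₂(α(θ)))` with `α(θ) = [-e₃,θ]/‖[-e₃,θ]‖` for `θ ≠ ±e₃`,
and `W(x,±e₃) = w₀((x₁,x₂), e₁)`. Then `R_W f(s,θ) = 0` for all `s ∈ ℝ`, `θ ∈ S²`,
where `R_W f(s,θ)` is the integral of `W(·,θ) f` over the plane `{⟨x,θ⟩ = s}` with its
2-dimensional Lebesgue measure (realized as the translate by `sθ` of `θ^⊥`). -/
theorem stmt18
    (w₀ : EuclideanSpace ℝ (Fin 2) → EuclideanSpace ℝ (Fin 2) → ℝ)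
    (hw₀ : ∀ y b, ‖b‖ = 1 → 1 / 2 ≤ w₀ y b ∧ w₀ y b ≤ 1)
    (f₀ : EuclideanSpace ℝ (Fin 2) → ℝ)
    (hf₀smooth : ContDiff ℝ (⊤ : ℕ∞) f₀) (hf₀supp : HasCompactSupport f₀)
    (hker : ∀ (y β : EuclideanSpace ℝ (Fin 2)), ‖β‖ = 1 → ⟪y, β⟫_ℝ = 0 →
      ∫ t : ℝ, w₀ (y + t • β) β * f₀ (y + t • β) = 0)
    (ψ : ℝ → ℝ) (hψsmooth : ContDiff ℝ (⊤ : ℕ∞) ψ) (hψsupp : HasCompactSupport ψ)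
    (f : EuclideanSpace ℝ (Fin 3) → ℝ)
    (hf : ∀ x, f x = ψ (x 2) * f₀ (proj12 x))
    (W : EuclideanSpace ℝ (Fin 3) → EuclideanSpace ℝ (Fin 3) → ℝ)
    (hW : ∀ (x θ : EuclideanSpace ℝ (Fin 3)),
      θ ≠ EuclideanSpace.single (2 : Fin 3) (1 : ℝ) →
      θ ≠ -EuclideanSpace.single (2 : Fin 3) (1 : ℝ) →
      W x θ = w₀ (proj12 x)
        (proj12 (‖cross3 (-EuclideanSpace.single (2 : Fin 3) (1 : ℝ)) θ‖⁻¹ •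
          cross3 (-EuclideanSpace.single (2 : Fin 3) (1 : ℝ)) θ)))
    (hWpole : ∀ (x θ : EuclideanSpace ℝ (Fin 3)),
      (θ = EuclideanSpace.single (2 : Fin 3) (1 : ℝ) ∨
        θ = -EuclideanSpace.single (2 : Fin 3) (1 : ℝ)) →
      W x θ = w₀ (proj12 x) (EuclideanSpace.single (0 : Fin 2) (1 : ℝ))) :
    ∀ (s : ℝ) (θ : EuclideanSpace ℝ (Fin 3)), ‖θ‖ = 1 →
      ∫ y : ((Submodule.span ℝ {θ})ᗮ : Submodule ℝ (EuclideanSpace ℝ (Fin 3))),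
          W (s • θ + (y : EuclideanSpace ℝ (Fin 3))) θ *
            f (s • θ + (y : EuclideanSpace ℝ (Fin 3))) = 0 := by
  intro s θ hθ
  by_cases hpole : θ = EuclideanSpace.single (2 : Fin 3) (1 : ℝ) ∨
      θ = -EuclideanSpace.single (2 : Fin 3) (1 : ℝ)
  · -- pole case
    set β : EuclideanSpace ℝ (Fin 2) := EuclideanSpace.single (0 : Fin 2) (1 : ℝ) with hβdef
    set u : EuclideanSpace ℝ (Fin 3) := EuclideanSpace.single (0 : Fin 3) (1 : ℝ) with hudef
    set v : EuclideanSpace ℝ (Fin 3) := EuclideanSpace.single (1 : Fin 3) (1 : ℝ) with hvdef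
    have hβ : ‖β‖ = 1 := by simp [hβdef, EuclideanSpace.norm_single]
    have hun : ‖u‖ = 1 := by simp [hudef, EuclideanSpace.norm_single]
    have hvn : ‖v‖ = 1 := by simp [hvdef, EuclideanSpace.norm_single]
    have hθ02 : θ 0 = 0 ∧ θ 1 = 0 := by
      rcases hpole with h | h <;> rw [h] <;>
        constructor <;> simp [EuclideanSpace.single_apply]
    have humem : u ∈ (Submodule.span ℝ {θ})ᗮ := by
      rw [Submodule.mem_orthogonal_singleton_iff_inner_right, hudef,
        EuclideanSpace.inner_single_right]
      simp [hθ02.1]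
    have hvmem : v ∈ (Submodule.span ℝ {θ})ᗮ := by
      rw [Submodule.mem_orthogonal_singleton_iff_inner_right, hvdef,
        EuclideanSpace.inner_single_right]
      simp [hθ02.2]
    have huv : ⟪v, u⟫_ℝ = 0 := by
      rw [hudef, EuclideanSpace.inner_single_right, hvdef]
      simp [EuclideanSpace.single_apply]
    have hu2 : u 2 = 0 := by
      rw [hudef]; simp [EuclideanSpace.single_apply]
    have hup : proj12 u = β := by
      ext i
      fin_cases i <;>
        simp [proj12, hudef, hβdef, EuclideanSpace.single_apply]
    have hWθ : ∀ x, W x θ = w₀ (proj12 x) β := fun x => hWpole x θ hpole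
    exact core w₀ f₀ hker ψ f hf W θ hθ s β hβ u v humem hvmem hun hvn huv hu2 hup hWθ
  · push_neg at hpole
    obtain ⟨hne, hne'⟩ := hpole
    set e3 : EuclideanSpace ℝ (Fin 3) := EuclideanSpace.single (2 : Fin 3) (1 : ℝ) with he3
    set c : EuclideanSpace ℝ (Fin 3) := cross3 (-e3) θ with hcdef
    have hc0 : c 0 = θ 1 := by
      simp [hcdef, cross3, he3, EuclideanSpace.single_apply]
    have hc1 : c 1 = -(θ 0) := by
      simp [hcdef, cross3, he3, EuclideanSpace.single_apply]
    have hc2 : c 2 = 0 := by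
      simp [hcdef, cross3, he3, EuclideanSpace.single_apply]
    have hsum : θ 0 ^ 2 + θ 1 ^ 2 + θ 2 ^ 2 = 1 := by
      have := hθ
      rw [EuclideanSpace.norm_eq] at this
      have h2 : ∑ i : Fin 3, ‖θ i‖ ^ 2 = 1 := by
        rwa [show (1:ℝ) = Real.sqrt 1 by simp, Real.sqrt_inj (by positivity) (by norm_num)] at this
      simpa [Fin.sum_univ_three, Real.norm_eq_abs, sq_abs] using h2
    have hnz : θ 0 ^ 2 + θ 1 ^ 2 ≠ 0 := by
      intro h
      have h0 : θ 0 = 0 := by nlinarith [sq_nonneg (θ 0), sq_nonneg (θ 1)]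
      have h1 : θ 1 = 0 := by nlinarith [sq_nonneg (θ 0), sq_nonneg (θ 1)]
      have h22 : θ 2 ^ 2 = 1 := by nlinarith
      have : θ 2 = 1 ∨ θ 2 = -1 := by
        have hmul : (θ 2 - 1) * (θ 2 + 1) = 0 := by nlinarith
        rcases mul_eq_zero.1 hmul with h | h
        · exact Or.inl (by linarith)
        · exact Or.inr (by linarith)
      rcases this with h | h
      · exact hne (by
          ext i
          fin_cases i <;> simp [he3, EuclideanSpace.single_apply, h0, h1, h])
      · exact hne' (by
          ext i
          fin_cases i <;> simp [he3, EuclideanSpace.single_apply, h0, h1, h])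
    -- the direction vector
    set r : ℝ := Real.sqrt (θ 0 ^ 2 + θ 1 ^ 2) with hrdef
    have hr2 : r ^ 2 = θ 0 ^ 2 + θ 1 ^ 2 := Real.sq_sqrt (by positivity)
    have hrpos : 0 < r := Real.sqrt_pos.mpr
      (lt_of_le_of_ne (by positivity) (Ne.symm hnz))
    have hrne : r ≠ 0 := ne_of_gt hrpos
    have hnc : ‖c‖ = r := by
      rw [EuclideanSpace.norm_eq, Fin.sum_univ_three, hc0, hc1, hc2, hrdef]
      simp only [Real.norm_eq_abs, sq_abs]
      rw [show (-θ 0)^2 = θ 0 ^2 by ring, show θ 1 ^ 2 + θ 0 ^ 2 + 0 ^ 2 = θ 0 ^2 + θ 1 ^2 by ring]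
    have hcne : c ≠ 0 := by
      intro h; rw [h, norm_zero] at hnc; exact hrne hnc.symm
    set u : EuclideanSpace ℝ (Fin 3) := ‖c‖⁻¹ • c with hudef
    have hu0 : u 0 = θ 1 / r := by
      rw [hudef]; simp [hnc, hc0]; ring
    have hu1 : u 1 = -(θ 0) / r := by
      rw [hudef]; simp [hnc, hc1]; ring
    have hu2 : u 2 = 0 := by
      rw [hudef]; simp [hc2]
    have hun : ‖u‖ = 1 := norm_smul_inv_norm hcne
    have humem : u ∈ (Submodule.span ℝ {θ})ᗮ := by
      rw [Submodule.mem_orthogonal_singleton_iff_inner_right]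
      rw [PiLp.inner_apply]
      simp only [RCLike.inner_apply, conj_trivial]
      rw [Fin.sum_univ_three, hu0, hu1, hu2]
      field_simp
      ring
    set β : EuclideanSpace ℝ (Fin 2) := proj12 u with hβdef
    have hβ0 : β 0 = θ 1 / r := by rw [hβdef]; exact hu0
    have hβ1 : β 1 = -(θ 0) / r := by rw [hβdef]; exact hu1
    have hβ : ‖β‖ = 1 := by
      rw [EuclideanSpace.norm_eq, Fin.sum_univ_two, hβ0, hβ1]
      rw [show ‖θ 1 / r‖ ^ 2 + ‖-(θ 0) / r‖ ^ 2 = (1:ℝ) by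
        simp only [Real.norm_eq_abs, sq_abs]
        field_simp
        linarith [hr2]]
      exact Real.sqrt_one
    set v : EuclideanSpace ℝ (Fin 3) :=
      (WithLp.equiv 2 (Fin 3 → ℝ)).symm ![θ 0 * θ 2 / r, θ 1 * θ 2 / r, -r] with hvdef
    have hv0 : v 0 = θ 0 * θ 2 / r := by
      rw [hvdef, WithLp.equiv_symm_apply]
      norm_num
    have hv1 : v 1 = θ 1 * θ 2 / r := by
      rw [hvdef, WithLp.equiv_symm_apply]
      norm_num
    have hv2 : v 2 = -r := by
      rw [hvdef, WithLp.equiv_symm_apply]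
      norm_num
      rfl
    have hvn : ‖v‖ = 1 := by
      have key : ‖θ 0 * θ 2 / r‖ ^ 2 + ‖θ 1 * θ 2 / r‖ ^ 2 + ‖-r‖ ^ 2 = (1:ℝ) := by
        simp only [Real.norm_eq_abs, sq_abs]
        have e : (θ 0 * θ 2 / r) ^ 2 + (θ 1 * θ 2 / r) ^ 2 + (-r) ^ 2
            = θ 2 ^ 2 * ((θ 0 ^ 2 + θ 1 ^ 2) / r ^ 2) + r ^ 2 := by ring
        rw [e, ← hr2, div_self (pow_ne_zero 2 hrne), mul_one]
        linarith [hr2, hsum]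
      rw [EuclideanSpace.norm_eq, Fin.sum_univ_three, hv0, hv1, hv2, key]
      exact Real.sqrt_one
    have hvmem : v ∈ (Submodule.span ℝ {θ})ᗮ := by
      rw [Submodule.mem_orthogonal_singleton_iff_inner_right, PiLp.inner_apply]
      simp only [RCLike.inner_apply, conj_trivial]
      rw [Fin.sum_univ_three, hv0, hv1, hv2]
      have e : θ 0 * θ 2 / r * θ 0 + θ 1 * θ 2 / r * θ 1 + -r * θ 2
          = θ 2 * ((θ 0 ^ 2 + θ 1 ^ 2) / r) - θ 2 * r := by ring
      rw [e, ← hr2, sq, mul_div_assoc, div_self hrne, mul_one]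
      ring
    have huv : ⟪v, u⟫_ℝ = 0 := by
      rw [PiLp.inner_apply]
      simp only [RCLike.inner_apply, conj_trivial]
      rw [Fin.sum_univ_three, hv0, hv1, hv2, hu0, hu1, hu2]
      ring
    have hup : proj12 u = β := hβdef.symm
    have hWθ : ∀ x, W x θ = w₀ (proj12 x) β := fun x => hW x θ hne hne'
    exact core w₀ f₀ hker ψ f hf W θ hθ s β hβ u v humem hvmem hun hvn huv hu2 hup hWθ
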